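/- arXiv:1011.4927 — 5 statements merged into one kernel-verified Lean document; each statement's English description precedes it below -/
import Mathlib

section
/- Let d ≥ 1 and let f ∈ ℝ⟨x₁,…,x_d⟩ with star f = f. Then the following are equivalent: (i) for every n ≥ 1 and every tuple X of symmetric matrices in M_n(ℝ), the matrix f(X) is positive semidefinite; (ii) for every real inner product space V, every tuple X = (X₁,…,X_d) of symmetric ℝ-linear operators Xᵢ : V → V (i.e. ⟪Xᵢu, w⟫ = ⟪u, Xᵢw⟫ for all u, w ∈ V), and every vector v ∈ V, one has ⟪f(X)v, v⟫ ≥ 0. -/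
/-!
Matrices are the symmetric operators on `EuclideanSpace ℝ (Fin n)`, which gives (ii) ⇒ (i).
Conversely, `f` is a combination of words of length at most some `N`, so `f(X)v` only involves
the vectors `w(X)v` with `|w| ≤ N`. They span a finite-dimensional subspace `K ∋ v`, and the
compressions `Yᵢ = P_K Xᵢ|_K` are symmetric with `w(Y)v = w(X)v` for `|w| ≤ N`: each partial
product `w'(X)v` of such a word already lies in `K`, where `P_K` acts trivially. Hence
`⟪f(X)v, v⟫ = ⟪f(Y)v, v⟫`, and in an orthonormal basis of `K` the latter is a quadratic form of
the matrix `f(Y)`, nonnegative by (i).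
-/

open Matrix RealInnerProductSpace

namespace FreeAlgebra
variable {R σ A B : Type*} [CommSemiring R] [Semiring A] [Algebra R A] [Semiring B] [Algebra R B]

theorem lift_algHom_comp_apply {F : Type*} [FunLike F A B] [AlgHomClass F R A B] (φ : F)
    (X : σ → A) (f : FreeAlgebra R σ) :
    lift R (φ ∘ X) f = φ (lift R X f) := by
  change _ = (AlgHomClass.toAlgHom φ).comp (lift R X) f
  congr 1
  ext i
  simp

theorem lift_list_prod_map_ι (X : σ → A) (l : List σ) :
    lift R X (l.map (ι R)).prod = (l.map X).prod := by
  simp [map_list_prod, Function.comp_def]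

theorem basisFreeMonoid_apply (w : FreeMonoid σ) :
    basisFreeMonoid R σ w = (w.toList.map (ι R)).prod := by
  simp [basisFreeMonoid, equivMonoidAlgebraFreeMonoid, MonoidAlgebra.lift_single,
    FreeMonoid.lift_apply]

theorem exists_mem_span_list_prod_map_ι (f : FreeAlgebra R σ) :
    ∃ N, f ∈ Submodule.span R
      ((fun l : List σ => (l.map (ι R)).prod) '' {l | l.length ≤ N}) := by
  let b := basisFreeMonoid R σ
  refine ⟨(b.repr f).support.sup fun w => w.toList.length, Submodule.span_mono ?_
    (b.mem_span_repr_support f)⟩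
  rintro _ ⟨w, hw, rfl⟩
  exact ⟨w.toList, Finset.le_sup (f := fun w => w.toList.length) hw,
    (basisFreeMonoid_apply w).symm⟩

end FreeAlgebra

namespace Submodule
variable {𝕜 V : Type*} [RCLike 𝕜] [NormedAddCommGroup V] [InnerProductSpace 𝕜 V]
  (K : Submodule 𝕜 V) [K.HasOrthogonalProjection]

noncomputable def compression (T : V →ₗ[𝕜] V) : K →ₗ[𝕜] K :=
  (K.orthogonalProjectionOnto : V →ₗ[𝕜] K) ∘ₗ T ∘ₗ K.subtype

variable {K}

theorem compression_apply (T : V →ₗ[𝕜] V) (u : K) :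
    K.compression T u = K.orthogonalProjectionOnto (T u) := rfl

theorem coe_compression_apply_of_mem {T : V →ₗ[𝕜] V} {u : K} (h : T u ∈ K) :
    (K.compression T u : V) = T u := by
  rw [compression_apply, orthogonalProjectionOnto_mem_subspace_eq_self ⟨T u, h⟩]

theorem _root_.LinearMap.IsSymmetric.compression {T : V →ₗ[𝕜] V} (hT : T.IsSymmetric) :
    (K.compression T).IsSymmetric := fun u w => by
  rw [compression_apply, compression_apply, inner_orthogonalProjectionOnto_eq_of_mem_right,
    inner_orthogonalProjectionOnto_eq_of_mem_left, hT]

variable {σ : Type*} {X : σ → V →ₗ[𝕜] V} {v : K} {N : ℕ}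

theorem coe_list_prod_map_compression_apply
    (hK : ∀ l : List σ, l.length ≤ N → (l.map X).prod v ∈ K) (l : List σ) (hl : l.length ≤ N) :
    ((l.map fun i => K.compression (X i)).prod v : V) = (l.map X).prod v := by
  induction l with
  | nil => rfl
  | cons i l ih =>
    have hl' : l.length ≤ N := Nat.le_of_succ_le hl
    have hmem : X i ((l.map X).prod v) ∈ K := hK (i :: l) hl
    simp only [List.map_cons, List.prod_cons, Module.End.mul_apply]
    rw [coe_compression_apply_of_mem (by rwa [ih hl']), ih hl']

theorem coe_lift_compression_apply
    (hK : ∀ l : List σ, l.length ≤ N → (l.map X).prod v ∈ K) {f : FreeAlgebra 𝕜 σ}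
    (hf : f ∈ span 𝕜 ((fun l : List σ => (l.map (FreeAlgebra.ι 𝕜)).prod) '' {l | l.length ≤ N})) :
    (FreeAlgebra.lift 𝕜 (fun i => K.compression (X i)) f v : V) = FreeAlgebra.lift 𝕜 X f v := by
  induction hf using span_induction with
  | mem _ h =>
    obtain ⟨l, hl, rfl⟩ := h
    simp only [FreeAlgebra.lift_list_prod_map_ι]
    exact coe_list_prod_map_compression_apply hK l hl
  | zero => simp
  | add _ _ _ _ h₁ h₂ => simp [h₁, h₂]
  | smul _ _ _ h => simp [h]

end Submodule

section Matrices
variable {W n : Type*} [NormedAddCommGroup W] [InnerProductSpace ℝ W] [FiniteDimensional ℝ W]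
  [Fintype n] [DecidableEq n]

theorem OrthonormalBasis.inner_apply_self_eq_dotProduct (b : OrthonormalBasis n ℝ W)
    (T : Module.End ℝ W) (w : W) :
    ⟪T w, w⟫ = (b.repr w).ofLp ⬝ᵥ (LinearMap.toMatrixOrthonormal b T *ᵥ (b.repr w).ofLp) := by
  have hT : (b.repr (T w)).ofLp = LinearMap.toMatrixOrthonormal b T *ᵥ (b.repr w).ofLp :=
    (LinearMap.toMatrix_mulVec_repr b.toBasis b.toBasis T w).symm
  rw [← b.repr.inner_map_map, EuclideanSpace.inner_eq_star_dotProduct, star_trivial, hT]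

theorem LinearMap.isSymm_toMatrixOrthonormal_iff {T : Module.End ℝ W}
    (b : OrthonormalBasis n ℝ W) :
    (LinearMap.toMatrixOrthonormal b T).IsSymm ↔ T.IsSymmetric :=
  isHermitian_iff_isSymm.symm.trans (LinearMap.isHermitian_toMatrix_iff b)

end Matrices

namespace FreeAlgebra

def IsMatrixPositive {σ : Type*} (f : FreeAlgebra ℝ σ) : Prop :=
  ∀ n : ℕ, 1 ≤ n → ∀ X : σ → Matrix (Fin n) (Fin n) ℝ, (∀ i, (X i).IsSymm) →
    ∀ v : Fin n → ℝ, 0 ≤ v ⬝ᵥ (lift ℝ X f *ᵥ v)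

variable {σ : Type*} {f : FreeAlgebra ℝ σ}

theorem IsMatrixPositive.inner_lift_apply_self_nonneg_of_finiteDimensional
    (hf : f.IsMatrixPositive)
    {W : Type*} [NormedAddCommGroup W] [InnerProductSpace ℝ W] [FiniteDimensional ℝ W]
    {Y : σ → Module.End ℝ W} (hY : ∀ i, (Y i).IsSymmetric) (w : W) :
    0 ≤ ⟪lift ℝ Y f w, w⟫ := by
  obtain hW | hW := (Module.finrank ℝ W).eq_zero_or_pos
  · have : Subsingleton W := Module.finrank_zero_iff.mp hW
    simp [Subsingleton.elim w 0]
  let b := stdOrthonormalBasis ℝ W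
  rw [b.inner_apply_self_eq_dotProduct, ← lift_algHom_comp_apply]
  exact hf _ hW _ (fun i => (LinearMap.isSymm_toMatrixOrthonormal_iff b).2 (hY i)) _

theorem IsMatrixPositive.inner_lift_apply_self_nonneg [Finite σ]
    (hf : f.IsMatrixPositive)
    {V : Type*} [NormedAddCommGroup V] [InnerProductSpace ℝ V]
    {X : σ → Module.End ℝ V} (hX : ∀ i, (X i).IsSymmetric) (v : V) :
    0 ≤ ⟪lift ℝ X f v, v⟫ := by
  obtain ⟨N, hN⟩ := exists_mem_span_list_prod_map_ι f
  let K := Submodule.span ℝ ((fun l : List σ => (l.map X).prod v) '' {l | l.length ≤ N})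
  have hK : ∀ l : List σ, l.length ≤ N → (l.map X).prod v ∈ K :=
    fun l hl => Submodule.subset_span ⟨l, hl, rfl⟩
  have : FiniteDimensional ℝ K :=
    FiniteDimensional.span_of_finite ℝ ((List.finite_length_le σ N).image _)
  have := hf.inner_lift_apply_self_nonneg_of_finiteDimensional
    (fun i => (hX i).compression (K := K)) (⟨v, hK [] N.zero_le⟩ : K)
  rwa [Submodule.coe_inner, Submodule.coe_lift_compression_apply hK hN] at this

theorem isMatrixPositive_of_inner_lift_apply_self_nonneg
    (hf : ∀ (V : Type) [NormedAddCommGroup V] [InnerProductSpace ℝ V] (X : σ → Module.End ℝ V),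
      (∀ i, (X i).IsSymmetric) → ∀ v : V, 0 ≤ ⟪lift ℝ X f v, v⟫) :
    f.IsMatrixPositive := by
  intro n _ X hX v
  let b := EuclideanSpace.basisFun (Fin n) ℝ
  let Y i := (LinearMap.toMatrixOrthonormal b).symm (X i)
  have hY : ∀ i, (Y i).IsSymmetric := fun i =>
    (LinearMap.isSymm_toMatrixOrthonormal_iff b).1 (by simpa [Y] using hX i)
  have := hf (EuclideanSpace ℝ (Fin n)) Y hY (WithLp.toLp 2 v)
  rw [b.inner_apply_self_eq_dotProduct, ← lift_algHom_comp_apply] at this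
  simp only [Y, Function.comp_def, StarAlgEquiv.apply_symm_apply] at this
  exact this

end FreeAlgebra

theorem statement3_general (d : ℕ) (f : FreeAlgebra ℝ (Fin d)) :
    (∀ (n : ℕ), 1 ≤ n → ∀ X : Fin d → Matrix (Fin n) (Fin n) ℝ,
        (∀ i, (X i)ᵀ = X i) →
        ∀ v : Fin n → ℝ, 0 ≤ v ⬝ᵥ ((FreeAlgebra.lift ℝ X f).mulVec v)) ↔
    (∀ (V : Type) [NormedAddCommGroup V] [InnerProductSpace ℝ V]
        (X : Fin d → Module.End ℝ V),
        (∀ (i : Fin d) (u w : V), ⟪X i u, w⟫ = ⟪u, X i w⟫) →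
        ∀ v : V, 0 ≤ ⟪(FreeAlgebra.lift ℝ X f) v, v⟫) :=
  ⟨fun hf _ _ _ _ hX v => FreeAlgebra.IsMatrixPositive.inner_lift_apply_self_nonneg hf hX v,
    FreeAlgebra.isMatrixPositive_of_inner_lift_apply_self_nonneg⟩

/-- For a symmetric element `f` of the free algebra `ℝ⟨x₁,…,x_d⟩`,
positive semidefiniteness of `f(X)` for all tuples `X` of symmetric real matrices (of all
sizes `n ≥ 1`) is equivalent to `⟪f(X)v, v⟫ ≥ 0` for all tuples `X` of symmetric linear
operators on an arbitrary real inner product space `V` and all vectors `v ∈ V`. -/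
theorem statement3 (d : ℕ) (hd : 1 ≤ d) (f : FreeAlgebra ℝ (Fin d))
    (hf : star f = f) :
    (∀ (n : ℕ), 1 ≤ n → ∀ X : Fin d → Matrix (Fin n) (Fin n) ℝ,
        (∀ i, (X i)ᵀ = X i) →
        ∀ v : Fin n → ℝ, 0 ≤ v ⬝ᵥ ((FreeAlgebra.lift ℝ X f).mulVec v)) ↔
    (∀ (V : Type) [NormedAddCommGroup V] [InnerProductSpace ℝ V]
        (X : Fin d → Module.End ℝ V),
        (∀ (i : Fin d) (u w : V), ⟪X i u, w⟫ = ⟪u, X i w⟫) →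
        ∀ v : V, 0 ≤ ⟪(FreeAlgebra.lift ℝ X f) v, v⟫) :=
  statement3_general d f
end

section
/- Let A be a unital associative ℝ-algebra with involution star and let f ∈ A satisfy star f = f. Then the following are equivalent: (i) for every ∗-representation π of A on a real inner product space V and every vector v ∈ V, one has ⟪π(f)v, v⟫ ≥ 0; (ii) every ℝ-linear functional L : A → ℝ satisfying L((star a)·a) ≥ 0 for all a ∈ A and L(star a) = L(a) for all a ∈ A also satisfies L(f) ≥ 0. -/
/-!
(i) ⇒ (ii) is the GNS construction: a symmetric functional `L` with `L (star a * a) ≥ 0` makes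
`⟪a, b⟫ = L (star a * b)` a semi-inner product on `A`. By Cauchy–Schwarz, left multiplication,
which has the formal adjoint given by left multiplication with `star a`, preserves the null vectors,
so it descends to a ∗-representation on the separation quotient, and the class `ξ` of `1`
satisfies `⟪π(f)ξ, ξ⟫ = L (star f) = L f`.
(ii) ⇒ (i): `a ↦ ⟪π(a)v, v⟫` is such a functional.
-/

open RealInnerProductSpace

section NullVectors

variable {𝕜 E : Type*} [RCLike 𝕜] [SeminormedAddCommGroup E] [InnerProductSpace 𝕜 E]

theorem norm_map_eq_zero_of_inner_map_eq_inner_map {T S : E →ₗ[𝕜] E}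
    (hTS : ∀ x y, inner 𝕜 (T x) y = inner 𝕜 x (S y)) {x : E} (hx : ‖x‖ = 0) :
    ‖T x‖ = 0 := by
  have hsq : ‖T x‖ ^ 2 ≤ 0 :=
    calc ‖T x‖ ^ 2 = RCLike.re (inner 𝕜 x (S (T x))) := by
          rw [← hTS, ← inner_self_eq_norm_sq (𝕜 := 𝕜)]
      _ ≤ ‖inner 𝕜 x (S (T x))‖ := RCLike.re_le_norm _
      _ ≤ ‖x‖ * ‖S (T x)‖ := norm_inner_le_norm _ _
      _ = 0 := by rw [hx, zero_mul]
  exact pow_eq_zero_iff two_ne_zero |>.mp (le_antisymm hsq (sq_nonneg _))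

theorem Inseparable.map_of_inner_map_eq_inner_map {T S : E →ₗ[𝕜] E}
    (hTS : ∀ x y, inner 𝕜 (T x) y = inner 𝕜 x (S y)) {x y : E} (hxy : Inseparable x y) :
    Inseparable (T x) (T y) := by
  rw [Metric.inseparable_iff, dist_eq_norm] at hxy ⊢
  rw [← map_sub]
  exact norm_map_eq_zero_of_inner_map_eq_inner_map hTS hxy

end NullVectors

namespace SeparationQuotient

variable {R M N : Type*} [Semiring R] [AddCommMonoid M] [Module R M] [TopologicalSpace M]
  [ContinuousAdd M] [ContinuousConstSMul R M] [AddCommMonoid N] [Module R N] [TopologicalSpace N]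
  [ContinuousAdd N] [ContinuousConstSMul R N]

noncomputable def mapLinearMap (T : M →ₗ[R] N)
    (hT : ∀ x y, Inseparable x y → Inseparable (T x) (T y)) :
    SeparationQuotient M →ₗ[R] SeparationQuotient N where
  toFun := lift (fun x => mk (T x)) fun x y h => mk_eq_mk.2 (hT x y h)
  map_add' := surjective_mk.forall₂.2 fun x y => by
    simp only [← mk_add, lift_mk, map_add]
  map_smul' c := surjective_mk.forall.2 fun x => by
    simp only [← mk_smul, lift_mk, map_smul, RingHom.id_apply]

@[simp]
theorem mapLinearMap_mk (T : M →ₗ[R] N)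
    (hT : ∀ x y, Inseparable x y → Inseparable (T x) (T y)) (x : M) :
    mapLinearMap T hT (mk x) = mk (T x) := rfl

end SeparationQuotient

structure PositiveFunctional (A : Type*) [Ring A] [Algebra ℝ A] [StarRing A] where
  toLinearMap : A →ₗ[ℝ] ℝ
  map_star_mul_self_nonneg : ∀ a, 0 ≤ toLinearMap (star a * a)
  map_star : ∀ a, toLinearMap (star a) = toLinearMap a

namespace PositiveFunctional

variable {A : Type*} [Ring A] [Algebra ℝ A] [StarRing A] (L : PositiveFunctional A)

def PreGNS (_L : PositiveFunctional A) : Type _ := A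

instance : AddCommGroup L.PreGNS := inferInstanceAs (AddCommGroup A)
instance : Module ℝ L.PreGNS := inferInstanceAs (Module ℝ A)

def toPreGNS : A ≃ₗ[ℝ] L.PreGNS := LinearEquiv.refl ℝ A

noncomputable def leftMul (a : A) : Module.End ℝ L.PreGNS :=
  L.toPreGNS.toLinearMap ∘ₗ LinearMap.mulLeft ℝ a ∘ₗ L.toPreGNS.symm.toLinearMap

@[simp]
theorem leftMul_toPreGNS (a b : A) : L.leftMul a (L.toPreGNS b) = L.toPreGNS (a * b) := rfl

variable [StarModule ℝ A]

noncomputable abbrev preGNSCore : PreInnerProductSpace.Core ℝ L.PreGNS where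
  inner a b := L.toLinearMap (star (L.toPreGNS.symm a) * L.toPreGNS.symm b)
  conj_inner_symm a b := by
    simpa using L.map_star (star (L.toPreGNS.symm a) * L.toPreGNS.symm b)
  re_inner_nonneg a := L.map_star_mul_self_nonneg _
  add_left a b c := by simp [star_add, add_mul]
  smul_left a b r := by simp [star_smul]

noncomputable instance : SeminormedAddCommGroup L.PreGNS :=
  InnerProductSpace.Core.toSeminormedAddCommGroup (c := L.preGNSCore)

noncomputable instance : InnerProductSpace ℝ L.PreGNS := InnerProductSpace.ofCore L.preGNSCore

theorem inner_toPreGNS (a b : A) :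
    ⟪L.toPreGNS a, L.toPreGNS b⟫ = L.toLinearMap (star a * b) := rfl

theorem inner_leftMul_left (a : A) (x y : L.PreGNS) :
    ⟪L.leftMul a x, y⟫ = ⟪x, L.leftMul (star a) y⟫ := by
  obtain ⟨x, rfl⟩ := L.toPreGNS.surjective x
  obtain ⟨y, rfl⟩ := L.toPreGNS.surjective y
  simp only [leftMul_toPreGNS, inner_toPreGNS, star_mul, mul_assoc]

/-- The quotient of `A` by the null vectors `{a | L (star a * a) = 0}`. -/
abbrev GNS := SeparationQuotient L.PreGNS

noncomputable def toGNS : A →ₗ[ℝ] L.GNS :=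
  (SeparationQuotient.mkCLM ℝ L.PreGNS).toLinearMap ∘ₗ L.toPreGNS.toLinearMap

theorem toGNS_surjective : Function.Surjective L.toGNS :=
  SeparationQuotient.surjective_mk.comp L.toPreGNS.surjective

theorem inner_toGNS (a b : A) : ⟪L.toGNS a, L.toGNS b⟫ = L.toLinearMap (star a * b) := rfl

theorem ext_toGNS {T S : Module.End ℝ L.GNS} (h : ∀ b, T (L.toGNS b) = S (L.toGNS b)) :
    T = S :=
  LinearMap.ext <| L.toGNS_surjective.forall.2 h

noncomputable def gnsRep : A →ₐ[ℝ] Module.End ℝ L.GNS where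
  toFun a := SeparationQuotient.mapLinearMap (L.leftMul a) fun _ _ h =>
    h.map_of_inner_map_eq_inner_map (L.inner_leftMul_left a)
  map_one' := L.ext_toGNS fun b => congrArg L.toGNS (one_mul b)
  map_mul' a a' := L.ext_toGNS fun b => congrArg L.toGNS (mul_assoc a a' b)
  map_zero' := L.ext_toGNS fun b => by simp [toGNS]
  map_add' a a' := L.ext_toGNS fun b => by simp [toGNS, add_mul]
  commutes' r := L.ext_toGNS fun b => by simp [toGNS, ← Algebra.smul_def]

theorem gnsRep_toGNS (a b : A) : L.gnsRep a (L.toGNS b) = L.toGNS (a * b) := rfl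

theorem inner_gnsRep_left (a : A) (x y : L.GNS) :
    ⟪L.gnsRep a x, y⟫ = ⟪x, L.gnsRep (star a) y⟫ := by
  obtain ⟨x, rfl⟩ := L.toGNS_surjective x
  obtain ⟨y, rfl⟩ := L.toGNS_surjective y
  simp only [gnsRep_toGNS, inner_toGNS, star_mul, mul_assoc]

theorem inner_gnsRep_toGNS_one (a : A) :
    ⟪L.gnsRep a (L.toGNS 1), L.toGNS 1⟫ = L.toLinearMap a := by
  rw [gnsRep_toGNS, inner_toGNS, mul_one, mul_one, L.map_star]

end PositiveFunctional

section VectorFunctional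

variable {A V : Type*} [Ring A] [Algebra ℝ A] [StarRing A] [SeminormedAddCommGroup V]
  [InnerProductSpace ℝ V]

noncomputable def vectorFunctional (π : A →ₐ[ℝ] Module.End ℝ V)
    (hπ : ∀ (a : A) (u w : V), ⟪π a u, w⟫ = ⟪u, π (star a) w⟫) (v : V) :
    PositiveFunctional A where
  toLinearMap := (innerₛₗ ℝ v) ∘ₗ LinearMap.applyₗ v ∘ₗ π.toLinearMap
  map_star_mul_self_nonneg a := by
    simp only [LinearMap.comp_apply, AlgHom.toLinearMap_apply, LinearMap.applyₗ_apply_apply,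
      innerₛₗ_apply_apply, map_mul, Module.End.mul_apply]
    rw [← hπ]
    exact real_inner_self_nonneg
  map_star a := by
    simp only [LinearMap.comp_apply, AlgHom.toLinearMap_apply, LinearMap.applyₗ_apply_apply,
      innerₛₗ_apply_apply]
    rw [← hπ, real_inner_comm]

theorem vectorFunctional_apply (π : A →ₐ[ℝ] Module.End ℝ V)
    (hπ : ∀ (a : A) (u w : V), ⟪π a u, w⟫ = ⟪u, π (star a) w⟫) (v : V) (a : A) :
    (vectorFunctional π hπ v).toLinearMap a = ⟪π a v, v⟫ :=
  real_inner_comm _ _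

end VectorFunctional

theorem statement7_general (A : Type) [Ring A] [Algebra ℝ A] [StarRing A] [StarModule ℝ A]
    (f : A) :
    (∀ (V : Type) [NormedAddCommGroup V] [InnerProductSpace ℝ V]
        (π : A →ₐ[ℝ] Module.End ℝ V),
        (∀ (a : A) (u w : V), ⟪π a u, w⟫ = ⟪u, π (star a) w⟫) →
        ∀ v : V, 0 ≤ ⟪π f v, v⟫) ↔
    (∀ L : A →ₗ[ℝ] ℝ,
        (∀ a : A, 0 ≤ L (star a * a)) →
        (∀ a : A, L (star a) = L a) →
        0 ≤ L f) := by
  constructor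
  · intro h L hpos hsym
    let φ : PositiveFunctional A := ⟨L, hpos, hsym⟩
    simpa only [φ.inner_gnsRep_toGNS_one] using
      h φ.GNS φ.gnsRep φ.inner_gnsRep_left (φ.toGNS 1)
  · intro h V _ _ π hπ v
    let φ := vectorFunctional π hπ v
    simpa only [φ, vectorFunctional_apply] using
      h φ.toLinearMap φ.map_star_mul_self_nonneg φ.map_star

/-- For a symmetric element `f` of a unital ℝ-algebra with involution `A`:
`⟪π(f)v, v⟫ ≥ 0` for every ∗-representation `π` and every vector `v` iff every positive
symmetric ℝ-linear functional `L` on `A` satisfies `L(f) ≥ 0`. -/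
theorem statement7 (A : Type) [Ring A] [Algebra ℝ A] [StarRing A] [StarModule ℝ A]
    (f : A) (hf : star f = f) :
    (∀ (V : Type) [NormedAddCommGroup V] [InnerProductSpace ℝ V]
        (π : A →ₐ[ℝ] Module.End ℝ V),
        (∀ (a : A) (u w : V), ⟪π a u, w⟫ = ⟪u, π (star a) w⟫) →
        ∀ v : V, 0 ≤ ⟪π f v, v⟫) ↔
    (∀ L : A →ₗ[ℝ] ℝ,
        (∀ a : A, 0 ≤ L (star a * a)) →
        (∀ a : A, L (star a) = L a) →
        0 ≤ L f) :=
  statement7_general A f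
end

section
/- Let A be a unital associative ℝ-algebra with involution star and let L : A → ℝ be an ℝ-linear functional such that L((star a)·a) ≥ 0 for all a ∈ A and L(star a) = L(a) for all a ∈ A. Then there exist a real inner product space V, a ∗-representation π of A on V, and a vector v ∈ V such that L(a) = ⟪π(a)v, v⟫ for every a ∈ A. -/
/-!
The form `B a b = L (star a * b)` is symmetric and positive semidefinite, so by Cauchy–Schwarz it
becomes an inner product on `A ⧸ N`, where `N` is its kernel. The identity
`B (a * x) y = B x (star a * y)` shows both that `N` is a left ideal, so that left multiplication
acts on `A ⧸ N`, and that `star a` acts as the adjoint of `a`. Finally `L a = L (star a) = B a 1`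
is the matrix coefficient of `a` at the class of `1`.
-/

namespace Submodule

variable {R A : Type*} [CommRing R] [Ring A] [Algebra R A]

noncomputable def mulLeftQuotient (p : Submodule R A) (hp : ∀ (a : A), ∀ x ∈ p, a * x ∈ p) :
    A →ₐ[R] Module.End R (A ⧸ p) :=
  AlgHom.ofLinearMap
    { toFun a := p.mapQ p (LinearMap.mulLeft R a)
        -- `hp a` has this type only after unfolding `≤`; stated so, the `mapQ` simp lemmas apply
        (show p ≤ p.comap (LinearMap.mulLeft R a) from hp a)
      map_add' a b := by ext; simp [add_mul]
      map_smul' r a := by ext; simp }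
    (by ext; simp) (fun a b => by ext; simp)

end Submodule

namespace LinearMap.BilinForm

variable {M : Type*} [AddCommGroup M] [Module ℝ M] {B : LinearMap.BilinForm ℝ M}

theorem IsPosSemidef.apply_sq_le (hB : B.IsPosSemidef) (x y : M) :
    B x y ^ 2 ≤ B x x * B y y := by
  have hquad : ∀ t : ℝ, 0 ≤ B y y * (t * t) + 2 * B x y * t + B x x := fun t => by
    have := hB.nonneg (x + t • y)
    simp only [map_add, map_smul, LinearMap.add_apply, LinearMap.smul_apply, smul_eq_mul,
      hB.isSymm.eq y x] at this
    linarith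
  have := discrim_le_zero hquad
  rw [discrim] at this
  linarith

theorem IsPosSemidef.mem_ker_of_apply_self_eq_zero (hB : B.IsPosSemidef) {x : M}
    (hx : B x x = 0) : x ∈ LinearMap.ker B :=
  LinearMap.mem_ker.2 <| LinearMap.ext fun y => by
    have := hB.apply_sq_le x y
    rw [hx, zero_mul] at this
    exact pow_eq_zero_iff two_ne_zero |>.1 (le_antisymm this (sq_nonneg _))

abbrev IsPosSemidef.innerProductCore (hB : B.IsPosSemidef) :
    InnerProductSpace.Core ℝ (M ⧸ LinearMap.ker B) where
  inner x y := hB.isSymm.isRefl.liftQ₂ B (LinearMap.ker B) le_rfl x y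
  conj_inner_symm x y := by
    induction x using Submodule.Quotient.induction_on
    induction y using Submodule.Quotient.induction_on
    exact hB.isSymm.eq _ _
  re_inner_nonneg x := by
    induction x using Submodule.Quotient.induction_on
    exact hB.nonneg _
  add_left x y z := by simp only [map_add, LinearMap.add_apply]
  smul_left x y r := by simp
  definite x hx := by
    induction x using Submodule.Quotient.induction_on
    exact (Submodule.Quotient.mk_eq_zero _).2 (hB.mem_ker_of_apply_self_eq_zero hx)

end LinearMap.BilinForm

section GNS

variable {A : Type*} [Ring A] [Algebra ℝ A] [StarRing A] [StarModule ℝ A]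

noncomputable def gnsForm (L : A →ₗ[ℝ] ℝ) : LinearMap.BilinForm ℝ A :=
  LinearMap.mk₂ ℝ (fun a b => L (star a * b))
    (fun a a' b => by rw [star_add, add_mul, map_add])
    (fun r a b => by rw [star_smul, star_trivial, smul_mul_assoc, map_smul])
    (fun a b b' => by rw [mul_add, map_add])
    (fun r a b => by rw [mul_smul_comm, map_smul])

variable (L : A →ₗ[ℝ] ℝ)

@[simp]
theorem gnsForm_apply (a b : A) : gnsForm L a b = L (star a * b) := rfl

theorem gnsForm_isPosSemidef (hpos : ∀ a : A, 0 ≤ L (star a * a))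
    (hsym : ∀ a : A, L (star a) = L a) : (gnsForm L).IsPosSemidef where
  eq a b := by rw [gnsForm_apply, gnsForm_apply, ← hsym, star_mul, star_star]
  nonneg := hpos

theorem gnsForm_mul_left (a x y : A) : gnsForm L (a * x) y = gnsForm L x (star a * y) := by
  simp only [gnsForm_apply, star_mul, mul_assoc]

theorem mul_mem_ker_gnsForm (a : A) {x : A} (hx : x ∈ LinearMap.ker (gnsForm L)) :
    a * x ∈ LinearMap.ker (gnsForm L) := by
  ext y
  rw [gnsForm_mul_left, LinearMap.mem_ker.1 hx, LinearMap.zero_apply, LinearMap.zero_apply]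

end GNS

open RealInnerProductSpace

/-- **GNS construction.** Every positive symmetric ℝ-linear functional `L`
on a unital ℝ-algebra with involution `A` is of the form `L(a) = ⟪π(a)v, v⟫` for some
∗-representation `π` of `A` on a real inner product space `V` and a vector `v ∈ V`. -/
theorem statement8 (A : Type) [Ring A] [Algebra ℝ A] [StarRing A] [StarModule ℝ A]
    (L : A →ₗ[ℝ] ℝ)
    (hpos : ∀ a : A, 0 ≤ L (star a * a))
    (hsym : ∀ a : A, L (star a) = L a) :
    ∃ (V : Type) (_ : NormedAddCommGroup V) (_ : InnerProductSpace ℝ V)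
      (π : A →ₐ[ℝ] Module.End ℝ V) (v : V),
      (∀ (a : A) (u w : V), ⟪π a u, w⟫ = ⟪u, π (star a) w⟫) ∧
      (∀ a : A, L a = ⟪π a v, v⟫) := by
  let N := LinearMap.ker (gnsForm L)
  let core := (gnsForm_isPosSemidef L hpos hsym).innerProductCore
  let _ : NormedAddCommGroup (A ⧸ N) := core.toNormedAddCommGroup
  let _ : InnerProductSpace ℝ (A ⧸ N) := InnerProductSpace.ofCore core.toCore
  refine ⟨A ⧸ N, _, _, N.mulLeftQuotient fun a _ => mul_mem_ker_gnsForm L a,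
    Submodule.Quotient.mk 1, ?_, ?_⟩
  · intro a u w
    induction u using Submodule.Quotient.induction_on
    induction w using Submodule.Quotient.induction_on
    exact gnsForm_mul_left L _ _ _
  · intro a
    show L a = gnsForm L (a * 1) 1
    rw [gnsForm_apply, mul_one, star_mul, star_one, one_mul, hsym]
end

section
/- Let A be a unital associative ℝ-algebra with involution star and let M be a quadratic module in A. Then the set of bounded elements A_b := {a ∈ A : there exists n ∈ ℕ with n·1 − (star a)·a ∈ M} is a unital ℝ-subalgebra of A which is closed under star; in particular A_b contains all real multiples of 1, and it is closed under addition, multiplication, and the involution. -/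
/-- For a quadratic module `M` in a unital ℝ-algebra with involution `A`,
the set of bounded elements `A_b = {a : ∃ n, n·1 − (star a)·a ∈ M}` is a unital
ℝ-subalgebra of `A` closed under `star`; in particular it contains all real multiples of
`1` and is closed under addition, multiplication and the involution. -/
theorem statement9 (A : Type) [Ring A] [Algebra ℝ A] [StarRing A] [StarModule ℝ A]
    (M : Set A)
    (h1 : (1 : A) ∈ M)
    (hadd : ∀ a ∈ M, ∀ b ∈ M, a + b ∈ M)
    (hmul : ∀ m ∈ M, ∀ a : A, star a * m * a ∈ M) :
    (∃ S : Subalgebra ℝ A,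
        (S : Set A) = {a : A | ∃ n : ℕ, (n : ℕ) • (1 : A) - star a * a ∈ M} ∧
        ∀ a ∈ S, star a ∈ S) ∧
    (∀ r : ℝ, r • (1 : A) ∈ {a : A | ∃ n : ℕ, (n : ℕ) • (1 : A) - star a * a ∈ M}) ∧
    (∀ a ∈ {a : A | ∃ n : ℕ, (n : ℕ) • (1 : A) - star a * a ∈ M},
      ∀ b ∈ {a : A | ∃ n : ℕ, (n : ℕ) • (1 : A) - star a * a ∈ M},
        a + b ∈ {a : A | ∃ n : ℕ, (n : ℕ) • (1 : A) - star a * a ∈ M} ∧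
        a * b ∈ {a : A | ∃ n : ℕ, (n : ℕ) • (1 : A) - star a * a ∈ M}) ∧
    (∀ a ∈ {a : A | ∃ n : ℕ, (n : ℕ) • (1 : A) - star a * a ∈ M},
        star a ∈ {a : A | ∃ n : ℕ, (n : ℕ) • (1 : A) - star a * a ∈ M}) := by
  -- 0 ∈ M
  have hzero : (0:A) ∈ M := by simpa using hmul 1 h1 0
  -- closure under nonneg real scaling
  have hscal : ∀ t : ℝ, 0 ≤ t → ∀ m ∈ M, t • m ∈ M := by
    intro t ht m hm
    have h := hmul m hm (Real.sqrt t • 1)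
    have hs : star (Real.sqrt t • (1:A)) = Real.sqrt t • 1 := by simp
    rw [hs] at h
    have h2 : (Real.sqrt t * Real.sqrt t) • m ∈ M := by
      simpa [smul_mul_assoc, mul_smul_comm, smul_smul] using h
    simpa [Real.mul_self_sqrt ht] using h2
  -- nat smul closure
  have hnsmul : ∀ n : ℕ, ∀ m ∈ M, n • m ∈ M := by
    intro n
    induction n with
    | zero => intro m hm; simpa using hzero
    | succ k ih =>
        intro m hm
        rw [succ_nsmul]; exact hadd _ (ih m hm) m hm
  -- real multiples of 1
  have hsmul1 : ∀ r : ℝ, r • (1 : A) ∈ {a : A | ∃ n : ℕ, (n : ℕ) • (1 : A) - star a * a ∈ M} := by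
    intro r
    refine ⟨⌈r*r⌉₊, ?_⟩
    have e1 : star (r • (1:A)) * (r • 1) = (r*r) • (1:A) := by
      simp [smul_mul_assoc, mul_smul_comm, smul_smul]
    have e2 : ((⌈r*r⌉₊ : ℕ)) • (1:A) = ((⌈r*r⌉₊ : ℝ)) • (1:A) := by
      rw [Nat.cast_smul_eq_nsmul]
    show _ ∈ M
    rw [e1, e2, ← sub_smul]
    exact hscal _ (by have := Nat.le_ceil (r*r); linarith) 1 h1
  -- addition
  have haddB : ∀ a ∈ {a : A | ∃ n : ℕ, (n : ℕ) • (1 : A) - star a * a ∈ M},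
      ∀ b ∈ {a : A | ∃ n : ℕ, (n : ℕ) • (1 : A) - star a * a ∈ M},
      a + b ∈ {a : A | ∃ n : ℕ, (n : ℕ) • (1 : A) - star a * a ∈ M} := by
    rintro a ⟨n, hn⟩ b ⟨m, hm⟩
    refine ⟨2*(n+m), ?_⟩
    have hd : star (a-b) * (a-b) ∈ M := by simpa using hmul 1 h1 (a-b)
    have key : ((2*(n+m) : ℕ)) • (1:A) - star (a+b) * (a+b) =
        (((n:ℕ) • (1:A) - star a * a) + ((n:ℕ) • (1:A) - star a * a)) +
        (((m:ℕ) • (1:A) - star b * b) + ((m:ℕ) • (1:A) - star b * b)) +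
        star (a-b) * (a-b) := by
      simp only [star_add, star_sub, mul_add, add_mul, mul_sub, sub_mul, smul_sub,
        smul_add, mul_smul_comm, smul_mul_assoc, mul_one, one_mul, mul_smul, add_nsmul]
      abel
    show _ ∈ M
    rw [key]
    exact hadd _ (hadd _ (hadd _ hn _ hn) _ (hadd _ hm _ hm)) _ hd
  -- multiplication
  have hmulB : ∀ a ∈ {a : A | ∃ n : ℕ, (n : ℕ) • (1 : A) - star a * a ∈ M},
      ∀ b ∈ {a : A | ∃ n : ℕ, (n : ℕ) • (1 : A) - star a * a ∈ M},
      a * b ∈ {a : A | ∃ n : ℕ, (n : ℕ) • (1 : A) - star a * a ∈ M} := by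
    rintro a ⟨n, hn⟩ b ⟨m, hm⟩
    refine ⟨n*m, ?_⟩
    have t1 : (n:ℕ) • ((m:ℕ) • (1:A) - star b * b) ∈ M := hnsmul n _ hm
    have t2 : star b * ((n:ℕ) • (1:A) - star a * a) * b ∈ M := hmul _ hn b
    have key : ((n*m : ℕ)) • (1:A) - star (a*b) * (a*b) =
        (n:ℕ) • ((m:ℕ) • (1:A) - star b * b) + star b * ((n:ℕ) • (1:A) - star a * a) * b := by
      simp only [star_mul, mul_add, add_mul, mul_sub, sub_mul, smul_sub, smul_add,
        mul_smul_comm, smul_mul_assoc, mul_one, one_mul, mul_smul, mul_assoc]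
      abel
    show _ ∈ M
    rw [key]
    exact hadd _ t1 _ t2
  -- star closure
  have hstarB : ∀ a ∈ {a : A | ∃ n : ℕ, (n : ℕ) • (1 : A) - star a * a ∈ M},
      star a ∈ {a : A | ∃ n : ℕ, (n : ℕ) • (1 : A) - star a * a ∈ M} := by
    rintro a ⟨n0, hn0⟩
    -- bump to n = n0+1 ≥ 1
    set n := n0 + 1 with hn_def
    have hn : (n:ℕ) • (1:A) - star a * a ∈ M := by
      have := hadd _ hn0 _ h1
      simpa [hn_def, succ_nsmul, sub_add_eq_add_sub] using this
    refine ⟨n, ?_⟩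
    -- m1 : n•(a star a) - (a star a)^2 ∈ M
    have m1 : a * ((n:ℕ) • (1:A) - star a * a) * star a ∈ M := by
      simpa using hmul _ hn (star a)
    -- m2 : (n•1 - a star a)^2 ∈ M
    have hsadj : star ((n:ℕ) • (1:A) - a * star a) = (n:ℕ) • (1:A) - a * star a := by
      simp
    have m2 : ((n:ℕ) • (1:A) - a * star a) * ((n:ℕ) • (1:A) - a * star a) ∈ M := by
      have := hmul 1 h1 ((n:ℕ) • (1:A) - a * star a)
      rwa [hsadj, mul_one] at this
    have m3 : ((n*n : ℕ)) • (1:A) - (n:ℕ) • (a * star a) ∈ M := by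
      have key : ((n*n : ℕ)) • (1:A) - (n:ℕ) • (a * star a) =
          a * ((n:ℕ) • (1:A) - star a * a) * star a +
          ((n:ℕ) • (1:A) - a * star a) * ((n:ℕ) • (1:A) - a * star a) := by
        simp only [mul_add, add_mul, mul_sub, sub_mul, smul_sub, smul_add,
          mul_smul_comm, smul_mul_assoc, mul_one, one_mul, mul_smul, mul_assoc]
        abel
      rw [key]; exact hadd _ m1 _ m2
    have m4 : ((1:ℝ)/(n:ℝ)) • (((n*n : ℕ)) • (1:A) - (n:ℕ) • (a * star a)) ∈ M :=
      hscal _ (by positivity) _ m3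
    have hne : (n:ℝ) ≠ 0 := by positivity
    have e1 : ((1:ℝ)/(n:ℝ)) * ((n:ℝ)*(n:ℝ)) = (n:ℝ) := by field_simp
    have e2 : ((1:ℝ)/(n:ℝ)) * (n:ℝ) = 1 := by field_simp
    have c1 : ((n*n:ℕ)) • (1:A) = ((n:ℝ)*(n:ℝ)) • (1:A) := by
      rw [← Nat.cast_smul_eq_nsmul ℝ (n*n) (1:A)]; push_cast; ring_nf
    have c2 : (n:ℕ) • (a * star a) = ((n:ℝ)) • (a * star a) :=
      (Nat.cast_smul_eq_nsmul ℝ n _).symm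
    have c3 : (n:ℕ) • (1:A) = ((n:ℝ)) • (1:A) := (Nat.cast_smul_eq_nsmul ℝ n _).symm
    have key2 : ((1:ℝ)/(n:ℝ)) • (((n*n : ℕ)) • (1:A) - (n:ℕ) • (a * star a)) =
        (n:ℕ) • (1:A) - star (star a) * star a := by
      rw [star_star, c1, c2, c3, smul_sub, smul_smul, smul_smul, e1, e2, one_smul]
    show _ ∈ M
    rw [← key2]
    exact m4
  refine ⟨?_, hsmul1, fun a ha b hb => ⟨haddB a ha b hb, hmulB a ha b hb⟩, hstarB⟩
  refine ⟨{ carrier := {a : A | ∃ n : ℕ, (n : ℕ) • (1 : A) - star a * a ∈ M}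
            add_mem' := fun {a b} ha hb => haddB a ha b hb
            mul_mem' := fun {a b} ha hb => hmulB a ha b hb
            one_mem' := by simpa using hsmul1 1
            zero_mem' := by simpa using hsmul1 0
            algebraMap_mem' := fun r => by
              simpa [Algebra.algebraMap_eq_smul_one] using hsmul1 r }, rfl, hstarB⟩
end

section
/- Fix ν, d ≥ 1 and k ∈ ℕ, and let C_k ⊆ M_ν(ℝ[x₁,…,x_d]) be the set of all finite sums Σ_i Gᵢᵀ Gᵢ where each Gᵢ ∈ M_ν(ℝ[x₁,…,x_d]) has all entries of total degree at most k. Then C_k is closed under coefficientwise limits: if (F_n) is a sequence in C_k and F ∈ M_ν(ℝ[x₁,…,x_d]) is such that for every pair of indices (i,j) and every monomial m the coefficient of m in the (i,j) entry of F_n converges, as n → ∞, to the coefficient of m in the (i,j) entry of F, then F ∈ C_k. -/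
/-!
Fix a basis `b` of the polynomials of total degree `≤ k`. Writing the entries of each `Gᵢ` in
this basis shows that the elements of `C_k` are exactly the matrices `gramMap ℝ b Q` with `Q`
positive semidefinite (a Gram matrix). `gramMap ℝ b` is linear on a finite-dimensional space, and
it vanishes on no nonzero positive semidefinite `Q`: writing `Q = Mᵀ M`, a zero diagonal entry of
`gramMap ℝ b Q` is a vanishing sum of squares of real polynomials. The image of a closed cone under
such a map is closed: rescale `Qₙ` to `Qₙ / (1 + ‖Qₙ‖)` and pass to a convergent subsequence; if
the scaling factors tended to `0`, the limit would be a nonzero element of the cone in the kernel.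
-/

open MvPolynomial Matrix Filter Topology

section TransposeMulSelf

variable {A n s : Type*} [CommSemiring A] [Fintype n] [Fintype s]

theorem Matrix.transpose_mul_self_eq_sum_updateRow [DecidableEq n] (p₀ : n) (W : Matrix s n A) :
    Wᵀ * W = ∑ r, (updateRow 0 p₀ (W r))ᵀ * updateRow 0 p₀ (W r) := by
  ext p q
  simp [mul_apply, sum_apply, updateRow_apply]

theorem Matrix.sum_transpose_mul_self_eq (G : s → Matrix n n A) :
    ∑ i, (G i)ᵀ * G i = (of fun x : s × n => G x.1 x.2)ᵀ * of fun x : s × n => G x.1 x.2 := by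
  ext p q
  simp [mul_apply, sum_apply, Fintype.sum_prod_type]

end TransposeMulSelf

open scoped MatrixOrder in
theorem Matrix.PosSemidef.exists_eq_transpose_mul_self {n : Type*} [Fintype n]
    {Q : Matrix n n ℝ} (hQ : Q.PosSemidef) : ∃ M : Matrix n n ℝ, Q = Mᵀ * M := by
  classical
  obtain ⟨M, rfl⟩ := CStarAlgebra.nonneg_iff_eq_star_mul_self.mp hQ.nonneg
  exact ⟨M, by rw [star_eq_conjTranspose, conjTranspose_eq_transpose_of_trivial]⟩

theorem Matrix.isClosed_setOf_posSemidef {n : Type*} [Fintype n] :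
    IsClosed {Q : Matrix n n ℝ | Q.PosSemidef} := by
  simp only [posSemidef_iff_dotProduct_mulVec, Set.ofPred_and, Set.ofPred_forall]
  refine (isClosed_eq ?_ continuous_id).inter
    (isClosed_iInter fun x => isClosed_le continuous_const ?_)
  · exact continuous_id.matrix_conjTranspose
  · exact continuous_const.dotProduct (continuous_id.matrix_mulVec continuous_const)

theorem Submodule.span_range_coe_basis {R M ι : Type*} [Semiring R] [AddCommMonoid M] [Module R M]
    {V : Submodule R M} (b : Module.Basis ι R V) : span R (Set.range fun i => (b i : M)) = V :=
  (span_range_subtype_eq_top_iff V fun i => (b i).2).1 b.span_eq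

theorem MvPolynomial.eq_zero_of_sum_mul_self_eq_zero {σ s : Type*} [Fintype s]
    {f : s → MvPolynomial σ ℝ} (h : ∑ i, f i * f i = 0) (i : s) : f i = 0 := by
  refine MvPolynomial.funext fun x => ?_
  have hx : ∑ j, eval x (f j) * eval x (f j) = 0 := by simpa using congrArg (eval x) h
  simpa using (Finset.sum_eq_zero_iff_of_nonneg fun j _ => mul_self_nonneg _).1 hx i
    (Finset.mem_univ i)

theorem exists_mem_eq_of_tendsto_map_of_cone {E F : Type*} [NormedAddCommGroup E]
    [NormedSpace ℝ E] [FiniteDimensional ℝ E] [AddCommGroup F] [Module ℝ F] [TopologicalSpace F]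
    [ContinuousSMul ℝ F] [T2Space F] (f : E →L[ℝ] F) {K : Set E} (hK : IsClosed K)
    (hK_smul : ∀ c : ℝ, 0 ≤ c → ∀ x ∈ K, c • x ∈ K) (hK_ker : ∀ x ∈ K, f x = 0 → x = 0)
    {x : ℕ → E} (hx : ∀ n, x n ∈ K) {y : F} (hy : Tendsto (fun n => f (x n)) atTop (𝓝 y)) :
    ∃ z ∈ K, f z = y := by
  set c : ℕ → ℝ := fun n => (1 + ‖x n‖)⁻¹
  have hc_pos : ∀ n, 0 < c n := fun n => by positivity
  have hc_norm : ∀ n, ‖c n • x n‖ = 1 - c n := fun n => by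
    have : (1 + ‖x n‖) * c n = 1 := mul_inv_cancel₀ (by positivity)
    rw [norm_smul, Real.norm_of_nonneg (hc_pos n).le]
    linear_combination this
  obtain ⟨L, hL_ball, φ, hφ, hL⟩ := (isCompact_closedBall (0 : E) 1).tendsto_subseq
    (x := fun n => c n • x n) fun n => by simp [hc_norm, (hc_pos n).le]
  have hLK : L ∈ K := hK.mem_of_tendsto hL
    (Eventually.of_forall fun n => hK_smul _ (hc_pos _).le _ (hx _))
  have hc_lim : Tendsto (fun n => c (φ n)) atTop (𝓝 (1 - ‖L‖)) := by
    refine (tendsto_const_nhds.sub hL.norm).congr fun n => ?_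
    simp only [Function.comp_apply, hc_norm]
    ring
  have hfL : f L = (1 - ‖L‖) • y := by
    refine tendsto_nhds_unique ((f.continuous.tendsto L).comp hL) ?_
    simpa [Function.comp_def] using hc_lim.smul (hy.comp hφ.tendsto_atTop)
  have hL_norm : ‖L‖ < 1 := by
    refine lt_of_le_of_ne (by simpa using hL_ball) fun h => ?_
    have : L = 0 := hK_ker L hLK (by simp [hfL, h])
    simp [this] at h
  refine ⟨(1 - ‖L‖)⁻¹ • L, hK_smul _ (inv_nonneg.2 (sub_nonneg.2 hL_norm.le)) _ hLK, ?_⟩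
  rw [map_smul, hfL, smul_smul, inv_mul_cancel₀ (sub_ne_zero.2 hL_norm.ne'), one_smul]

section Gram

variable {R A n ι s : Type*} [CommSemiring R] [CommSemiring A] [Algebra R A] [Fintype ι]
  (b : ι → A)

variable (R) in
def gramMap : Matrix (n × ι) (n × ι) R →ₗ[R] Matrix n n A where
  toFun Q := of fun p q => ∑ α, ∑ β, Q (p, α) (q, β) • (b α * b β)
  map_add' Q Q' := by ext; simp [add_smul, Finset.sum_add_distrib]
  map_smul' c Q := by ext; simp [Finset.smul_sum, smul_smul]

def combineRows (M : Matrix s (n × ι) R) : Matrix s n A :=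
  of fun r p => ∑ α, M r (p, α) • b α

theorem gramMap_transpose_mul_self [Fintype s] (M : Matrix s (n × ι) R) :
    gramMap R b (Mᵀ * M) = (combineRows b M)ᵀ * combineRows b M := by
  ext p q
  simp only [gramMap, combineRows, LinearMap.coe_mk, AddHom.coe_mk, of_apply, mul_apply,
    transpose_apply, Finset.sum_mul, Finset.mul_sum, Finset.sum_smul, smul_mul_smul_comm]
  rw [Finset.sum_comm]
  exact (Finset.sum_congr rfl fun _ _ => Finset.sum_comm).trans Finset.sum_comm

theorem combineRows_mem_span (M : Matrix s (n × ι) R) (r : s) (p : n) :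
    combineRows b M r p ∈ Submodule.span R (Set.range b) :=
  (Submodule.mem_span_range_iff_exists_fun R).2 ⟨_, rfl⟩

end Gram

section RealGram

variable {A n ι : Type*} [CommRing A] [Algebra ℝ A] [Fintype n] [Fintype ι] {b : ι → A}

theorem exists_posSemidef_gramMap_eq {s : Type*} [Fintype s] {G : s → Matrix n n A}
    (hG : ∀ i p q, G i p q ∈ Submodule.span ℝ (Set.range b)) :
    ∃ Q, Q.PosSemidef ∧ gramMap ℝ b Q = ∑ i, (G i)ᵀ * G i := by
  choose c hc using fun i p q => (Submodule.mem_span_range_iff_exists_fun ℝ).1 (hG i p q)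
  let M : Matrix (s × n) (n × ι) ℝ := of fun x y => c x.1 x.2 y.1 y.2
  refine ⟨Mᵀ * M, by simpa using posSemidef_conjTranspose_mul_self M, ?_⟩
  rw [gramMap_transpose_mul_self, sum_transpose_mul_self_eq]
  congr <;> ext x q <;> simp [combineRows, M, hc]

theorem exists_sum_transpose_mul_self_eq_gramMap (p₀ : n) {Q : Matrix (n × ι) (n × ι) ℝ}
    (hQ : Q.PosSemidef) :
    ∃ (m : ℕ) (G : Fin m → Matrix n n A), (∀ i p q, G i p q ∈ Submodule.span ℝ (Set.range b)) ∧
      gramMap ℝ b Q = ∑ i, (G i)ᵀ * G i := by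
  classical
  obtain ⟨M, rfl⟩ := hQ.exists_eq_transpose_mul_self
  let e := Fintype.equivFin (n × ι)
  refine ⟨_, fun i => updateRow 0 p₀ (combineRows b M (e.symm i)), fun i p q => ?_, ?_⟩
  · simp only [updateRow_apply]
    split_ifs
    · exact combineRows_mem_span b M _ q
    · exact Submodule.zero_mem _
  · rw [gramMap_transpose_mul_self, transpose_mul_self_eq_sum_updateRow p₀,
      ← e.symm.sum_comp]

theorem eq_zero_of_gramMap_eq_zero {σ : Type*} {b : ι → MvPolynomial σ ℝ}
    (hb : LinearIndependent ℝ b) {Q : Matrix (n × ι) (n × ι) ℝ} (hQ : Q.PosSemidef)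
    (h : gramMap ℝ b Q = 0) : Q = 0 := by
  obtain ⟨M, rfl⟩ := hQ.exists_eq_transpose_mul_self
  rw [gramMap_transpose_mul_self] at h
  have hW : combineRows b M = 0 := by
    funext r p
    exact eq_zero_of_sum_mul_self_eq_zero (by simpa [mul_apply] using congrFun (congrFun h p) p) r
  have hM : M = 0 := by
    ext r ⟨p, α⟩
    exact Fintype.linearIndependent_iff.1 hb _ (congrFun (congrFun hW r) p) α
  simp [hM]

end RealGram

def Matrix.coeffs {σ n : Type*} : Matrix n n (MvPolynomial σ ℝ) →ₗ[ℝ] n → n → (σ →₀ ℕ) → ℝ where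
  toFun F p q m := coeff m (F p q)
  map_add' _ _ := by ext; simp
  map_smul' _ _ := by ext; simp

theorem Matrix.coeffs_injective {σ n : Type*} :
    Function.Injective (Matrix.coeffs : Matrix n n (MvPolynomial σ ℝ) → _) :=
  fun _ _ h => by ext p q m; exact congrFun (congrFun (congrFun h p) q) m

attribute [local instance] Matrix.normedAddCommGroup Matrix.normedSpace in
theorem exists_posSemidef_gramMap_eq_of_tendsto {n ι σ : Type*} [Fintype n] [Fintype ι]
    {b : ι → MvPolynomial σ ℝ} (hb : LinearIndependent ℝ b)
    {Q : ℕ → Matrix (n × ι) (n × ι) ℝ} (hQ : ∀ k, (Q k).PosSemidef)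
    {F : Matrix n n (MvPolynomial σ ℝ)}
    (hF : ∀ p q m, Tendsto (fun k => coeff m (gramMap ℝ b (Q k) p q)) atTop
      (𝓝 (coeff m (F p q)))) :
    ∃ Q', Q'.PosSemidef ∧ gramMap ℝ b Q' = F := by
  obtain ⟨Q', hQ', hQ'F⟩ := exists_mem_eq_of_tendsto_map_of_cone (E := Matrix (n × ι) (n × ι) ℝ)
    (LinearMap.toContinuousLinearMap (Matrix.coeffs ∘ₗ gramMap ℝ b)) isClosed_setOf_posSemidef
    (fun c hc P hP => hP.smul hc)
    (fun P hP h0 => eq_zero_of_gramMap_eq_zero hb hP (coeffs_injective (by simpa using h0))) hQ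
    (tendsto_pi_nhds.2 fun p => tendsto_pi_nhds.2 fun q => tendsto_pi_nhds.2 (hF p q))
  exact ⟨Q', hQ', coeffs_injective hQ'F⟩

theorem statement11_general (ν d : ℕ) (hν : 1 ≤ ν) (k : ℕ)
    (Fseq : ℕ → Matrix (Fin ν) (Fin ν) (MvPolynomial (Fin d) ℝ))
    (F : Matrix (Fin ν) (Fin ν) (MvPolynomial (Fin d) ℝ))
    (hmem : ∀ n : ℕ, ∃ (m : ℕ)
        (G : Fin m → Matrix (Fin ν) (Fin ν) (MvPolynomial (Fin d) ℝ)),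
        (∀ (i : Fin m) (p q : Fin ν), (G i p q).totalDegree ≤ k) ∧
        Fseq n = ∑ i, (G i)ᵀ * G i)
    (hconv : ∀ (i j : Fin ν) (m : Fin d →₀ ℕ),
        Tendsto (fun n : ℕ => MvPolynomial.coeff m (Fseq n i j)) atTop
          (nhds (MvPolynomial.coeff m (F i j)))) :
    ∃ (m : ℕ) (G : Fin m → Matrix (Fin ν) (Fin ν) (MvPolynomial (Fin d) ℝ)),
      (∀ (i : Fin m) (p q : Fin ν), (G i p q).totalDegree ≤ k) ∧
      F = ∑ i, (G i)ᵀ * G i := by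
  let V := restrictTotalDegree (Fin d) ℝ k
  let b : Fin (Module.finrank ℝ V) → MvPolynomial (Fin d) ℝ := fun α => Module.finBasis ℝ V α
  have hb : LinearIndependent ℝ b :=
    (Module.finBasis ℝ V).linearIndependent.map' V.subtype V.ker_subtype
  have hspan (P : MvPolynomial (Fin d) ℝ) :
      P ∈ Submodule.span ℝ (Set.range b) ↔ P.totalDegree ≤ k := by
    rw [Submodule.span_range_coe_basis, mem_restrictTotalDegree]
  have hgram (n : ℕ) : ∃ Q, Q.PosSemidef ∧ gramMap ℝ b Q = Fseq n := by
    obtain ⟨m, G, hG, hFG⟩ := hmem n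
    rw [hFG]
    exact exists_posSemidef_gramMap_eq fun i p q => (hspan _).2 (hG i p q)
  choose Q hQ hQF using hgram
  obtain ⟨Q', hQ', rfl⟩ :=
    exists_posSemidef_gramMap_eq_of_tendsto hb hQ (by simpa only [hQF] using hconv)
  obtain ⟨m, G, hG, hFG⟩ := exists_sum_transpose_mul_self_eq_gramMap (b := b) ⟨0, hν⟩ hQ'
  exact ⟨m, G, fun i p q => (hspan _).1 (hG i p q), hFG⟩

/-- The cone `C_k` of finite sums `Σ Gᵢᵀ Gᵢ`, where each `Gᵢ` is a
`ν × ν` matrix polynomial all of whose entries have total degree at most `k`, is closed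
under coefficientwise limits. -/
theorem statement11 (ν d : ℕ) (hν : 1 ≤ ν) (hd : 1 ≤ d) (k : ℕ)
    (Fseq : ℕ → Matrix (Fin ν) (Fin ν) (MvPolynomial (Fin d) ℝ))
    (F : Matrix (Fin ν) (Fin ν) (MvPolynomial (Fin d) ℝ))
    (hmem : ∀ n : ℕ, ∃ (m : ℕ)
        (G : Fin m → Matrix (Fin ν) (Fin ν) (MvPolynomial (Fin d) ℝ)),
        (∀ (i : Fin m) (p q : Fin ν), (G i p q).totalDegree ≤ k) ∧
        Fseq n = ∑ i, (G i)ᵀ * G i)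
    (hconv : ∀ (i j : Fin ν) (m : Fin d →₀ ℕ),
        Tendsto (fun n : ℕ => MvPolynomial.coeff m (Fseq n i j)) atTop
          (nhds (MvPolynomial.coeff m (F i j)))) :
    ∃ (m : ℕ) (G : Fin m → Matrix (Fin ν) (Fin ν) (MvPolynomial (Fin d) ℝ)),
      (∀ (i : Fin m) (p q : Fin ν), (G i p q).totalDegree ≤ k) ∧
      F = ∑ i, (G i)ᵀ * G i :=
  statement11_general ν d hν k Fseq F hmem hconv
end
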